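/- arXiv:2201.08756 — 3 statements merged into one kernel-verified Lean document; each statement's English description precedes it below -/
import Mathlib

section
/- Let y ∈ ℝⁿ with y ≠ 0, X an n×d real matrix, and let 𝒮 be a set of pairs (D, V) of positive semidefinite matrices of sizes d×d and n×n. For (D,V) ∈ 𝒮 write N(D,V) = X D Xᵀ + V, J(β; D, V) = (y − Xβ)ᵀ V† (y − Xβ) + βᵀ D† β + tr(N(D,V))/‖y‖₂², Θ(D,V) = {β : y − Xβ ∈ range(V), β ∈ range(D)}, W(D,V) = tr((y yᵀ − N(D,V))ᵀ N(D,V)† (y yᵀ − N(D,V))), and G(β) = inf{ J(β; D, V) : (D,V) ∈ 𝒮, β ∈ Θ(D,V) } (an extended-real infimum). Suppose (D*, V*) ∈ 𝒮 satisfies y ∈ range(N(D*,V*)) and W(D*,V*) ≤ W(D,V) for every (D,V) ∈ 𝒮 with y ∈ range(N(D,V)). Then β* = D* Xᵀ N(D*,V*)† y satisfies G(β*) ≤ G(β) for all β ∈ ℝᵈ. -/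
/-!
For `β ∈ Θ(D,V)` write `β = D w` and `y − Xβ = V u`. With `z = N† y`, expanding
`(w − Xᵀz)ᵀ D (w − Xᵀz) + (u − z)ᵀ V (u − z) ≥ 0` gives
`J(β; D, V) ≥ yᵀ N† y + tr N / ‖y‖²`, with equality at `β = D Xᵀ z`; and
`range (X D) + range V ⊆ range N` makes every pair with `Θ(D,V)` nonempty feasible.
For feasible pairs `W = ‖y‖² (yᵀ N† y + tr N / ‖y‖²) − 2 ‖y‖²`, so the `W`-minimiser also
minimises this lower bound of `J`, and hence `G`.
-/

open Matrix

/-- The four Penrose conditions: `B` is the Moore–Penrose pseudoinverse of `A`. -/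
def IsMoorePenrose {m n : Type*} [Fintype m] [Fintype n]
    (A : Matrix m n ℝ) (B : Matrix n m ℝ) : Prop :=
  A * B * A = A ∧ B * A * B = B ∧ (A * B)ᵀ = A * B ∧ (B * A)ᵀ = B * A

/-- `N(D,V) = X D Xᵀ + V`. -/
def Nmat {n d : ℕ} (X : Matrix (Fin n) (Fin d) ℝ)
    (p : Matrix (Fin d) (Fin d) ℝ × Matrix (Fin n) (Fin n) ℝ) :
    Matrix (Fin n) (Fin n) ℝ :=
  X * p.1 * Xᵀ + p.2

/-- `Θ(D,V) = {β : y − Xβ ∈ range(V), β ∈ range(D)}`. -/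
def Theta {n d : ℕ} (y : Fin n → ℝ) (X : Matrix (Fin n) (Fin d) ℝ)
    (p : Matrix (Fin d) (Fin d) ℝ × Matrix (Fin n) (Fin n) ℝ) :
    Set (Fin d → ℝ) :=
  {β | y - X.mulVec β ∈ Set.range p.2.mulVec ∧ β ∈ Set.range p.1.mulVec}

/-- `J(β; D, V) = (y − Xβ)ᵀ V† (y − Xβ) + βᵀ D† β + tr(N(D,V))/‖y‖₂²`. -/
noncomputable def Jcost {n d : ℕ} (y : Fin n → ℝ) (X : Matrix (Fin n) (Fin d) ℝ)
    (pinvd : Matrix (Fin d) (Fin d) ℝ → Matrix (Fin d) (Fin d) ℝ)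
    (pinvn : Matrix (Fin n) (Fin n) ℝ → Matrix (Fin n) (Fin n) ℝ)
    (p : Matrix (Fin d) (Fin d) ℝ × Matrix (Fin n) (Fin n) ℝ)
    (β : Fin d → ℝ) : ℝ :=
  (y - X.mulVec β) ⬝ᵥ (pinvn p.2).mulVec (y - X.mulVec β) +
    β ⬝ᵥ (pinvd p.1).mulVec β + (Nmat X p).trace / (y ⬝ᵥ y)

/-- The SPICE covariance-fitting criterion `W(D,V) = ‖y yᵀ − N‖²_{N†}`. -/
noncomputable def Wcrit {n d : ℕ} (y : Fin n → ℝ) (X : Matrix (Fin n) (Fin d) ℝ)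
    (pinvn : Matrix (Fin n) (Fin n) ℝ → Matrix (Fin n) (Fin n) ℝ)
    (p : Matrix (Fin d) (Fin d) ℝ × Matrix (Fin n) (Fin n) ℝ) : ℝ :=
  ((vecMulVec y y - Nmat X p)ᵀ * pinvn (Nmat X p) *
      (vecMulVec y y - Nmat X p)).trace

/-- `G(β) = inf { J(β; D, V) : (D,V) ∈ 𝒮, β ∈ Θ(D,V) }` (extended-real infimum). -/
noncomputable def Gfun {n d : ℕ} (y : Fin n → ℝ) (X : Matrix (Fin n) (Fin d) ℝ)
    (pinvd : Matrix (Fin d) (Fin d) ℝ → Matrix (Fin d) (Fin d) ℝ)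
    (pinvn : Matrix (Fin n) (Fin n) ℝ → Matrix (Fin n) (Fin n) ℝ)
    (S : Set (Matrix (Fin d) (Fin d) ℝ × Matrix (Fin n) (Fin n) ℝ))
    (β : Fin d → ℝ) : EReal :=
  sInf {r : EReal | ∃ p ∈ S, β ∈ Theta y X p ∧
    r = (Jcost y X pinvd pinvn p β : ℝ)}

namespace Matrix

theorem mulVec_dotProduct {m k α : Type*} [Fintype m] [Fintype k] [CommSemiring α]
    (A : Matrix m k α) (x : k → α) (y : m → α) : A *ᵥ x ⬝ᵥ y = x ⬝ᵥ Aᵀ *ᵥ y := by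
  rw [dotProduct_transpose_mulVec, dotProduct_comm]

namespace PosSemidef

variable {m k : Type*}

theorem transpose_eq_self {A : Matrix m m ℝ} (hA : A.PosSemidef) : Aᵀ = A :=
  (isHermitian_iff_isSymm.mp hA.1).eq

variable [Fintype k]

open scoped MatrixOrder in
theorem mul_eq_zero_of_mul_mul_transpose_eq_zero {A : Matrix k k ℝ} (hA : A.PosSemidef)
    {C : Matrix m k ℝ} (h : C * A * Cᵀ = 0) : C * A = 0 := by
  classical
  obtain ⟨B, rfl⟩ := CStarAlgebra.nonneg_iff_eq_star_mul_self.mp hA.nonneg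
  have hCB : (C * Bᴴ) * (C * Bᴴ)ᴴ = 0 := by
    simpa [star_eq_conjTranspose, conjTranspose_mul, Matrix.mul_assoc] using h
  rw [star_eq_conjTranspose, ← Matrix.mul_assoc, self_mul_conjTranspose_eq_zero.mp hCB,
    Matrix.zero_mul]

variable [Fintype m]

theorem mul_mul_transpose_same {A : Matrix k k ℝ} (hA : A.PosSemidef) (B : Matrix m k ℝ) :
    (B * A * Bᵀ).PosSemidef := by
  simpa only [conjTranspose_eq_transpose_of_trivial] using hA.mul_mul_conjTranspose_same B

open scoped MatrixOrder in
theorem mul_eq_zero_of_mul_add_eq_zero {A C K : Matrix m m ℝ} (hA : A.PosSemidef)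
    (hC : C.PosSemidef) (h : K * (A + C) = 0) : K * A = 0 := by
  have hsum : K * A * Kᵀ + K * C * Kᵀ = 0 := by
    rw [← Matrix.add_mul, ← Matrix.mul_add, h, Matrix.zero_mul]
  have hKAK : K * A * Kᵀ = 0 := by
    have hKAK := (hA.mul_mul_conjTranspose_same K).nonneg
    have hKCK := (hC.mul_mul_conjTranspose_same K).nonneg
    rw [conjTranspose_eq_transpose_of_trivial] at hKAK hKCK
    exact (add_eq_zero_iff_of_nonneg hKAK hKCK).mp hsum |>.1
  exact hA.mul_eq_zero_of_mul_mul_transpose_eq_zero hKAK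

theorem two_mul_mulVec_dotProduct_le {A : Matrix m m ℝ} (hA : A.PosSemidef) (a b : m → ℝ) :
    2 * (A *ᵥ a ⬝ᵥ b) ≤ a ⬝ᵥ A *ᵥ a + b ⬝ᵥ A *ᵥ b := by
  have h := hA.dotProduct_mulVec_nonneg (a - b)
  have hba : b ⬝ᵥ A *ᵥ a = A *ᵥ a ⬝ᵥ b := dotProduct_comm _ _
  have hab : a ⬝ᵥ A *ᵥ b = A *ᵥ a ⬝ᵥ b := by rw [mulVec_dotProduct, hA.transpose_eq_self]
  simp only [star_trivial, mulVec_sub, sub_dotProduct, dotProduct_sub, hab, hba] at h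
  linarith

end PosSemidef

end Matrix

namespace IsMoorePenrose

section

variable {m k : Type*} [Fintype m] [Fintype k] {A : Matrix m k ℝ} {B C : Matrix k m ℝ}

theorem symm (h : IsMoorePenrose A B) : IsMoorePenrose B A :=
  ⟨h.2.1, h.1, h.2.2.2, h.2.2.1⟩

theorem transpose (h : IsMoorePenrose A B) : IsMoorePenrose Aᵀ Bᵀ := by
  obtain ⟨h₁, h₂, h₃, h₄⟩ := h
  refine ⟨?_, ?_, ?_, ?_⟩
  · conv_rhs => rw [← h₁]
    simp only [transpose_mul, Matrix.mul_assoc]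
  · conv_rhs => rw [← h₂]
    simp only [transpose_mul, Matrix.mul_assoc]
  · rw [← transpose_mul, transpose_transpose, h₄]
  · rw [← transpose_mul, transpose_transpose, h₃]

theorem unique (hB : IsMoorePenrose A B) (hC : IsMoorePenrose A C) : B = C := by
  have hB_eq : B = B * A * C := calc
    B = B * (A * B)ᵀ := by rw [hB.2.2.1, ← Matrix.mul_assoc, hB.2.1]
    _ = B * ((A * B)ᵀ * (A * C)ᵀ) := by
      conv_lhs => rw [← hC.1]
      simp only [transpose_mul, Matrix.mul_assoc]
    _ = B * A * C := by
      rw [hB.2.2.1, hC.2.2.1, ← Matrix.mul_assoc, ← Matrix.mul_assoc, ← Matrix.mul_assoc, hB.2.1]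
  have hC_eq : C = B * A * C := calc
    C = (C * A)ᵀ * C := by rw [hC.2.2.2, hC.2.1]
    _ = (B * A)ᵀ * (C * A)ᵀ * C := by
      conv_lhs => rw [← hB.1]
      simp only [transpose_mul, Matrix.mul_assoc]
    _ = B * A * C := by
      rw [hB.2.2.2, hC.2.2.2, Matrix.mul_assoc B A (C * A), ← Matrix.mul_assoc A C A, hC.1]
  exact hB_eq.trans hC_eq.symm

theorem mem_range_mulVec_iff (h : IsMoorePenrose A B) {y : m → ℝ} :
    y ∈ Set.range A.mulVec ↔ (A * B) *ᵥ y = y := by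
  refine ⟨?_, fun hy => ⟨B *ᵥ y, by rw [mulVec_mulVec, hy]⟩⟩
  rintro ⟨v, rfl⟩
  rw [mulVec_mulVec, h.1]

end

variable {m : Type*} [Fintype m] {A B : Matrix m m ℝ}

theorem transpose_eq_self (hA : Aᵀ = A) (h : IsMoorePenrose A B) : Bᵀ = B :=
  (hA ▸ h.transpose).unique h

theorem mulVec_dotProduct_mulVec_mulVec (hA : Aᵀ = A) (h : IsMoorePenrose A B) (w : m → ℝ) :
    A *ᵥ w ⬝ᵥ B *ᵥ (A *ᵥ w) = w ⬝ᵥ A *ᵥ w := by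
  rw [mulVec_dotProduct, hA, mulVec_mulVec, mulVec_mulVec, h.1]

theorem trace_vecMulVec_sub_mul_mul_vecMulVec_sub {N N' : Matrix m m ℝ} (hN : Nᵀ = N)
    (h : IsMoorePenrose N N') {y : m → ℝ} (hy : (N * N') *ᵥ y = y) :
    ((vecMulVec y y - N)ᵀ * N' * (vecMulVec y y - N)).trace =
      (y ⬝ᵥ y) * (y ⬝ᵥ N' *ᵥ y) - 2 * (y ⬝ᵥ y) + N.trace := by
  have hy' : y ᵥ* (N' * N) = y := by
    rw [← mulVec_transpose, transpose_mul, hN, h.transpose_eq_self hN, hy]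
  have hMM : (vecMulVec y y * N' * vecMulVec y y).trace = (y ⬝ᵥ y) * (y ⬝ᵥ N' *ᵥ y) := by
    rw [vecMulVec_mul, vecMulVec_mul_vecMulVec, trace_vecMulVec, dotProduct_smul, smul_eq_mul,
      ← dotProduct_mulVec, mul_comm]
  have hNM : (N * N' * vecMulVec y y).trace = y ⬝ᵥ y := by
    rw [mul_vecMulVec, hy, trace_vecMulVec]
  have hMN : (vecMulVec y y * N' * N).trace = y ⬝ᵥ y := by
    rw [Matrix.mul_assoc, vecMulVec_mul, hy', trace_vecMulVec]
  rw [transpose_sub, transpose_vecMulVec, hN, Matrix.sub_mul, Matrix.mul_sub, Matrix.sub_mul,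
    Matrix.sub_mul, trace_sub, trace_sub, trace_sub, hMM, hNM, hMN, h.1]
  ring

end IsMoorePenrose

section Covariance

variable {m k : Type*} [Fintype m] [Fintype k] {X : Matrix m k ℝ} {D : Matrix k k ℝ}
  {V N' : Matrix m m ℝ} {y : m → ℝ}

theorem mul_mulVec_eq_self_of_eq_add (hD : D.PosSemidef) (hV : V.PosSemidef)
    (hN' : IsMoorePenrose (X * D * Xᵀ + V) N') {w : k → ℝ} {u : m → ℝ}
    (he : y = X *ᵥ (D *ᵥ w) + V *ᵥ u) : ((X * D * Xᵀ + V) * N') *ᵥ y = y := by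
  classical
  set K : Matrix m m ℝ := 1 - (X * D * Xᵀ + V) * N'
  have hKN : K * (X * D * Xᵀ + V) = 0 := by
    rw [Matrix.sub_mul, Matrix.one_mul, hN'.1, sub_self]
  have hXDX := hD.mul_mul_transpose_same X
  have hKV : K * V = 0 :=
    hV.mul_eq_zero_of_mul_add_eq_zero hXDX (by rwa [add_comm] at hKN)
  have hKXD : K * X * D = 0 := by
    refine hD.mul_eq_zero_of_mul_mul_transpose_eq_zero ?_
    calc K * X * D * (K * X)ᵀ = K * (X * D * Xᵀ) * Kᵀ := by
          simp only [transpose_mul, Matrix.mul_assoc]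
      _ = 0 := by rw [hXDX.mul_eq_zero_of_mul_add_eq_zero hV hKN, Matrix.zero_mul]
  have hKy : K *ᵥ y = 0 := by
    rw [he, mulVec_add, mulVec_mulVec, mulVec_mulVec, mulVec_mulVec, hKXD, hKV,
      zero_mulVec, zero_mulVec, add_zero]
  rwa [sub_mulVec, one_mulVec, sub_eq_zero, eq_comm] at hKy

theorem dotProduct_mulVec_eq_add_of_isMoorePenrose (hD : D.PosSemidef) (hV : V.PosSemidef)
    (hN' : IsMoorePenrose (X * D * Xᵀ + V) N') (y : m → ℝ) :
    Xᵀ *ᵥ (N' *ᵥ y) ⬝ᵥ D *ᵥ (Xᵀ *ᵥ (N' *ᵥ y)) + N' *ᵥ y ⬝ᵥ V *ᵥ (N' *ᵥ y) =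
      y ⬝ᵥ N' *ᵥ y := by
  have hN'_symm := hN'.transpose_eq_self
    ((hD.mul_mul_transpose_same X).add hV).transpose_eq_self
  rw [mulVec_dotProduct, transpose_transpose, mulVec_mulVec, mulVec_mulVec, ← dotProduct_add,
    ← add_mulVec]
  exact hN'.symm.mulVec_dotProduct_mulVec_mulVec hN'_symm y

theorem dotProduct_mulVec_le_of_eq_add (hD : D.PosSemidef) (hV : V.PosSemidef)
    (hN' : IsMoorePenrose (X * D * Xᵀ + V) N') {w : k → ℝ} {u : m → ℝ}
    (he : y = X *ᵥ (D *ᵥ w) + V *ᵥ u) :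
    y ⬝ᵥ N' *ᵥ y ≤ w ⬝ᵥ D *ᵥ w + u ⬝ᵥ V *ᵥ u := by
  have hzz := dotProduct_mulVec_eq_add_of_isMoorePenrose hD hV hN' y
  set z := N' *ᵥ y
  have hyz : y ⬝ᵥ z = D *ᵥ w ⬝ᵥ Xᵀ *ᵥ z + V *ᵥ u ⬝ᵥ z := by
    rw [he, add_dotProduct, mulVec_dotProduct X]
  have hD_part := hD.two_mul_mulVec_dotProduct_le w (Xᵀ *ᵥ z)
  have hV_part := hV.two_mul_mulVec_dotProduct_le u z
  linarith

end Covariance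

/-- The minimum of `J(·; D, V)` over `Θ(D,V)`, attained at `spiceEstimate`. -/
noncomputable def spiceCost {n d : ℕ} (y : Fin n → ℝ) (X : Matrix (Fin n) (Fin d) ℝ)
    (pinvn : Matrix (Fin n) (Fin n) ℝ → Matrix (Fin n) (Fin n) ℝ)
    (p : Matrix (Fin d) (Fin d) ℝ × Matrix (Fin n) (Fin n) ℝ) : ℝ :=
  y ⬝ᵥ pinvn (Nmat X p) *ᵥ y + (Nmat X p).trace / (y ⬝ᵥ y)

noncomputable def spiceEstimate {n d : ℕ} (y : Fin n → ℝ) (X : Matrix (Fin n) (Fin d) ℝ)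
    (pinvn : Matrix (Fin n) (Fin n) ℝ → Matrix (Fin n) (Fin n) ℝ)
    (p : Matrix (Fin d) (Fin d) ℝ × Matrix (Fin n) (Fin n) ℝ) : Fin d → ℝ :=
  (p.1 * Xᵀ * pinvn (Nmat X p)) *ᵥ y

section SPICE

variable {n d : ℕ} {y : Fin n → ℝ} {X : Matrix (Fin n) (Fin d) ℝ}
  {pinvd : Matrix (Fin d) (Fin d) ℝ → Matrix (Fin d) (Fin d) ℝ}
  {pinvn : Matrix (Fin n) (Fin n) ℝ → Matrix (Fin n) (Fin n) ℝ}
  {p : Matrix (Fin d) (Fin d) ℝ × Matrix (Fin n) (Fin n) ℝ}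

theorem Nmat_posSemidef (hp : p.1.PosSemidef ∧ p.2.PosSemidef) : (Nmat X p).PosSemidef :=
  (hp.1.mul_mul_transpose_same X).add hp.2

theorem spiceCost_eq_Wcrit (hp : p.1.PosSemidef ∧ p.2.PosSemidef)
    (hpinvn : ∀ A : Matrix (Fin n) (Fin n) ℝ, A.PosSemidef → IsMoorePenrose A (pinvn A))
    (hy : y ∈ Set.range (Nmat X p).mulVec) :
    spiceCost y X pinvn p = (Wcrit y X pinvn p + 2 * (y ⬝ᵥ y)) / (y ⬝ᵥ y) := by
  rcases eq_or_ne (y ⬝ᵥ y) 0 with hyy | hyy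
  · simp [spiceCost, dotProduct_self_eq_zero.mp hyy]
  have hN := Nmat_posSemidef (X := X) hp
  have hN' := hpinvn _ hN
  rw [Wcrit, hN'.trace_vecMulVec_sub_mul_mul_vecMulVec_sub hN.transpose_eq_self
    (hN'.mem_range_mulVec_iff.mp hy), spiceCost]
  field_simp
  ring

theorem mem_range_of_mem_Theta (hp : p.1.PosSemidef ∧ p.2.PosSemidef)
    (hpinvn : ∀ A : Matrix (Fin n) (Fin n) ℝ, A.PosSemidef → IsMoorePenrose A (pinvn A))
    {β : Fin d → ℝ} (hβ : β ∈ Theta y X p) : y ∈ Set.range (Nmat X p).mulVec := by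
  obtain ⟨⟨u, hu⟩, ⟨w, rfl⟩⟩ := hβ
  have hN' := hpinvn _ (Nmat_posSemidef (X := X) hp)
  exact hN'.mem_range_mulVec_iff.mpr <|
    mul_mulVec_eq_self_of_eq_add hp.1 hp.2 hN' (by rw [hu]; abel)

theorem spiceCost_le_Jcost (hp : p.1.PosSemidef ∧ p.2.PosSemidef)
    (hpinvd : ∀ A : Matrix (Fin d) (Fin d) ℝ, A.PosSemidef → IsMoorePenrose A (pinvd A))
    (hpinvn : ∀ A : Matrix (Fin n) (Fin n) ℝ, A.PosSemidef → IsMoorePenrose A (pinvn A))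
    {β : Fin d → ℝ} (hβ : β ∈ Theta y X p) :
    spiceCost y X pinvn p ≤ Jcost y X pinvd pinvn p β := by
  obtain ⟨⟨u, hu⟩, ⟨w, rfl⟩⟩ := hβ
  have hle : y ⬝ᵥ pinvn (Nmat X p) *ᵥ y ≤ _ := dotProduct_mulVec_le_of_eq_add hp.1 hp.2
    (hpinvn _ (Nmat_posSemidef (X := X) hp)) (by rw [hu]; abel : y = _)
  rw [spiceCost, Jcost, ← hu,
    (hpinvn _ hp.2).mulVec_dotProduct_mulVec_mulVec hp.2.transpose_eq_self,
    (hpinvd _ hp.1).mulVec_dotProduct_mulVec_mulVec hp.1.transpose_eq_self]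
  linarith

theorem spiceEstimate_eq :
    spiceEstimate y X pinvn p = p.1 *ᵥ (Xᵀ *ᵥ (pinvn (Nmat X p) *ᵥ y)) := by
  simp only [spiceEstimate, mulVec_mulVec, Matrix.mul_assoc]

theorem sub_mulVec_spiceEstimate (hp : p.1.PosSemidef ∧ p.2.PosSemidef)
    (hpinvn : ∀ A : Matrix (Fin n) (Fin n) ℝ, A.PosSemidef → IsMoorePenrose A (pinvn A))
    (hy : y ∈ Set.range (Nmat X p).mulVec) :
    y - X *ᵥ spiceEstimate y X pinvn p = p.2 *ᵥ (pinvn (Nmat X p) *ᵥ y) := by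
  rw [spiceEstimate_eq]
  set z := pinvn (Nmat X p) *ᵥ y
  have hNz : (X * p.1 * Xᵀ + p.2) *ᵥ z = y := by
    rw [mulVec_mulVec]
    exact (hpinvn _ (Nmat_posSemidef hp)).mem_range_mulVec_iff.mp hy
  rw [← hNz, add_mulVec]
  simp only [← mulVec_mulVec]
  abel

theorem spiceEstimate_mem_Theta (hp : p.1.PosSemidef ∧ p.2.PosSemidef)
    (hpinvn : ∀ A : Matrix (Fin n) (Fin n) ℝ, A.PosSemidef → IsMoorePenrose A (pinvn A))
    (hy : y ∈ Set.range (Nmat X p).mulVec) :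
    spiceEstimate y X pinvn p ∈ Theta y X p :=
  ⟨⟨_, (sub_mulVec_spiceEstimate hp hpinvn hy).symm⟩, ⟨_, spiceEstimate_eq.symm⟩⟩

theorem Jcost_spiceEstimate (hp : p.1.PosSemidef ∧ p.2.PosSemidef)
    (hpinvd : ∀ A : Matrix (Fin d) (Fin d) ℝ, A.PosSemidef → IsMoorePenrose A (pinvd A))
    (hpinvn : ∀ A : Matrix (Fin n) (Fin n) ℝ, A.PosSemidef → IsMoorePenrose A (pinvn A))
    (hy : y ∈ Set.range (Nmat X p).mulVec) :
    Jcost y X pinvd pinvn p (spiceEstimate y X pinvn p) = spiceCost y X pinvn p := by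
  have hsplit := dotProduct_mulVec_eq_add_of_isMoorePenrose (N' := pinvn (Nmat X p)) hp.1 hp.2
    (hpinvn _ (Nmat_posSemidef hp)) y
  rw [Jcost, spiceCost, sub_mulVec_spiceEstimate hp hpinvn hy, spiceEstimate_eq,
    (hpinvn _ hp.2).mulVec_dotProduct_mulVec_mulVec hp.2.transpose_eq_self,
    (hpinvd _ hp.1).mulVec_dotProduct_mulVec_mulVec hp.1.transpose_eq_self, add_comm (_ ⬝ᵥ _),
    hsplit]

end SPICE

theorem stmt10_general {n d : ℕ} (y : Fin n → ℝ)
    (X : Matrix (Fin n) (Fin d) ℝ)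
    (S : Set (Matrix (Fin d) (Fin d) ℝ × Matrix (Fin n) (Fin n) ℝ))
    (hS : ∀ p ∈ S, p.1.PosSemidef ∧ p.2.PosSemidef)
    (pinvd : Matrix (Fin d) (Fin d) ℝ → Matrix (Fin d) (Fin d) ℝ)
    (pinvn : Matrix (Fin n) (Fin n) ℝ → Matrix (Fin n) (Fin n) ℝ)
    (hpinvd : ∀ A : Matrix (Fin d) (Fin d) ℝ, A.PosSemidef →
      IsMoorePenrose A (pinvd A))
    (hpinvn : ∀ A : Matrix (Fin n) (Fin n) ℝ, A.PosSemidef →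
      IsMoorePenrose A (pinvn A))
    (Ds : Matrix (Fin d) (Fin d) ℝ) (Vs : Matrix (Fin n) (Fin n) ℝ)
    (hmem : (Ds, Vs) ∈ S)
    (hfeas : y ∈ Set.range (Nmat X (Ds, Vs)).mulVec)
    (hmin : ∀ p ∈ S, y ∈ Set.range (Nmat X p).mulVec →
      Wcrit y X pinvn (Ds, Vs) ≤ Wcrit y X pinvn p) :
    ∀ β : Fin d → ℝ,
      Gfun y X pinvd pinvn S ((Ds * Xᵀ * pinvn (Nmat X (Ds, Vs))).mulVec y) ≤
        Gfun y X pinvd pinvn S β := by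
  intro β
  have hs := hS _ hmem
  refine le_sInf ?_
  rintro _ ⟨p, hpS, hβ, rfl⟩
  have hp := hS p hpS
  have hy := mem_range_of_mem_Theta hp hpinvn hβ
  calc Gfun y X pinvd pinvn S (spiceEstimate y X pinvn (Ds, Vs))
      ≤ (Jcost y X pinvd pinvn (Ds, Vs) (spiceEstimate y X pinvn (Ds, Vs)) : EReal) :=
        sInf_le ⟨_, hmem, spiceEstimate_mem_Theta hs hpinvn hfeas, rfl⟩
    _ ≤ (Jcost y X pinvd pinvn p β : EReal) := EReal.coe_le_coe_iff.mpr <| calc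
        _ = spiceCost y X pinvn (Ds, Vs) := Jcost_spiceEstimate hs hpinvd hpinvn hfeas
        _ ≤ spiceCost y X pinvn p := by
          rw [spiceCost_eq_Wcrit hs hpinvn hfeas, spiceCost_eq_Wcrit hp hpinvn hy]
          gcongr
          · exact dotProduct_self_star_nonneg y
          · exact hmin p hpS hy
        _ ≤ Jcost y X pinvd pinvn p β := spiceCost_le_Jcost hp hpinvd hpinvn hβ

/-- If `(D*, V*) ∈ 𝒮` is feasible and minimizes the SPICE criterion `W` among the
feasible pairs, then `β* = D* Xᵀ N(D*,V*)† y` minimizes `G`. -/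
theorem stmt10 {n d : ℕ} (y : Fin n → ℝ) (hy0 : y ≠ 0)
    (X : Matrix (Fin n) (Fin d) ℝ)
    (S : Set (Matrix (Fin d) (Fin d) ℝ × Matrix (Fin n) (Fin n) ℝ))
    (hS : ∀ p ∈ S, p.1.PosSemidef ∧ p.2.PosSemidef)
    (pinvd : Matrix (Fin d) (Fin d) ℝ → Matrix (Fin d) (Fin d) ℝ)
    (pinvn : Matrix (Fin n) (Fin n) ℝ → Matrix (Fin n) (Fin n) ℝ)
    (hpinvd : ∀ A : Matrix (Fin d) (Fin d) ℝ, A.PosSemidef →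
      IsMoorePenrose A (pinvd A))
    (hpinvn : ∀ A : Matrix (Fin n) (Fin n) ℝ, A.PosSemidef →
      IsMoorePenrose A (pinvn A))
    (Ds : Matrix (Fin d) (Fin d) ℝ) (Vs : Matrix (Fin n) (Fin n) ℝ)
    (hmem : (Ds, Vs) ∈ S)
    (hfeas : y ∈ Set.range (Nmat X (Ds, Vs)).mulVec)
    (hmin : ∀ p ∈ S, y ∈ Set.range (Nmat X p).mulVec →
      Wcrit y X pinvn (Ds, Vs) ≤ Wcrit y X pinvn p) :
    ∀ β : Fin d → ℝ,
      Gfun y X pinvd pinvn S ((Ds * Xᵀ * pinvn (Nmat X (Ds, Vs))).mulVec y) ≤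
        Gfun y X pinvd pinvn S β :=
  stmt10_general y X S hS pinvd pinvn hpinvd hpinvn Ds Vs hmem hfeas hmin
end

section
/- Let y ∈ ℝⁿ with y ≠ 0, X an n×d real matrix, and let 𝒮 be a set of pairs (D, V) of positive semidefinite matrices of sizes d×d and n×n. With N(D,V) = X D Xᵀ + V, J(β; D, V) = (y − Xβ)ᵀ V† (y − Xβ) + βᵀ D† β + tr(N(D,V))/‖y‖₂², Θ(D,V) = {β : y − Xβ ∈ range(V), β ∈ range(D)}, W(D,V) = tr((y yᵀ − N(D,V))ᵀ N(D,V)† (y yᵀ − N(D,V))), and G(β) = inf{ J(β; D, V) : (D,V) ∈ 𝒮, β ∈ Θ(D,V) }, assume: (i) there exists (D*, V*) ∈ 𝒮 with y ∈ range(N(D*,V*)) minimizing W over the feasible pairs in 𝒮; (ii) β_G ∈ ℝᵈ satisfies G(β_G) ≤ G(β) for all β; and (iii) the infimum defining G(β_G) is attained, i.e., there is (D_G, V_G) ∈ 𝒮 with β_G ∈ Θ(D_G, V_G) and J(β_G; D_G, V_G) = G(β_G). Then (D_G, V_G) minimizes W over the feasible pairs in 𝒮, and β_G = D_G Xᵀ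 N(D_G,V_G)† y. -/
open Matrix

/-!
For `β ∈ Θ(D, V)` write `y − Xβ = V u` and `β = D w`. Every `w'` with `N w' = 0` has
`V w' = 0` and `D Xᵀ w' = 0`, so `y = V u + X D w` is orthogonal to `ker N` and lies in
`range N`. Completing the square then gives
`J(β; D, V) = yᵀN†y + tr N / ‖y‖² + (N†y − u)ᵀ V (N†y − u) + (w − XᵀN†y)ᵀ D (w − XᵀN†y)`,
so the minimum of `J(·; D, V)` over `Θ(D, V)` is `yᵀN†y + tr N / ‖y‖² = W(D, V) / ‖y‖² + 2`,
attained exactly where `D w = D Xᵀ N† y`. Comparing `(D_G, V_G)` with `(D*, V*)` through `G`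
and through `W` squeezes these values together, and the vanishing remainder pins down `β_G`.
-/

namespace Matrix

theorem PosSemidef.transpose_eq_self_s11 {m : Type*} {A : Matrix m m ℝ} (hA : A.PosSemidef) :
    Aᵀ = A :=
  (isHermitian_iff_isSymm.mp hA.isHermitian).eq

variable {m k : Type*} [Fintype m] [Fintype k]

theorem PosSemidef.dotProduct_mulVec_self_nonneg {A : Matrix m m ℝ} (hA : A.PosSemidef)
    (x : m → ℝ) : 0 ≤ x ⬝ᵥ A *ᵥ x := by
  simpa using hA.dotProduct_mulVec_nonneg x

theorem PosSemidef.mulVec_eq_zero_of_dotProduct_add_eq_zero {A : Matrix m m ℝ}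
    {C : Matrix k k ℝ} (hA : A.PosSemidef) (hC : C.PosSemidef) {x : m → ℝ} {z : k → ℝ}
    (h : x ⬝ᵥ A *ᵥ x + z ⬝ᵥ C *ᵥ z = 0) : A *ᵥ x = 0 ∧ C *ᵥ z = 0 := by
  have hx := hA.dotProduct_mulVec_self_nonneg x
  have hz := hC.dotProduct_mulVec_self_nonneg z
  constructor
  · exact (hA.dotProduct_mulVec_zero_iff x).mp (by simp only [star_trivial]; linarith)
  · exact (hC.dotProduct_mulVec_zero_iff z).mp (by simp only [star_trivial]; linarith)

theorem dotProduct_mulVec_comm_of_transpose_eq {A : Matrix m m ℝ} (hA : Aᵀ = A)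
    (x z : m → ℝ) : x ⬝ᵥ A *ᵥ z = z ⬝ᵥ A *ᵥ x := by
  rw [dotProduct_mulVec, ← mulVec_transpose, hA, dotProduct_comm]

theorem dotProduct_mul_mul_transpose_mulVec (X : Matrix m k ℝ) (D : Matrix k k ℝ)
    (x z : m → ℝ) : x ⬝ᵥ (X * D * Xᵀ) *ᵥ z = (Xᵀ *ᵥ x) ⬝ᵥ D *ᵥ (Xᵀ *ᵥ z) := by
  rw [← mulVec_mulVec, ← mulVec_mulVec, dotProduct_mulVec, ← mulVec_transpose]

theorem trace_vecMulVec_mul_vecMulVec (y : m → ℝ) (B : Matrix m m ℝ) :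
    (vecMulVec y y * B * vecMulVec y y).trace = (y ⬝ᵥ y) * (y ⬝ᵥ B *ᵥ y) := by
  rw [vecMulVec_mul, vecMulVec_mul_vecMulVec, trace_vecMulVec, dotProduct_smul, smul_eq_mul,
    ← dotProduct_mulVec, mul_comm]

theorem trace_transpose_mul_mul_vecMulVec_sub {N B : Matrix m m ℝ} (hN : Nᵀ = N)
    (hB : N * B * N = N) {y : m → ℝ} (hy : y ∈ Set.range N.mulVec) :
    ((vecMulVec y y - N)ᵀ * B * (vecMulVec y y - N)).trace =
      (y ⬝ᵥ y) * (y ⬝ᵥ B *ᵥ y) - 2 * (y ⬝ᵥ y) + N.trace := by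
  obtain ⟨z, rfl⟩ := hy
  rw [transpose_sub, transpose_vecMulVec, hN]
  set Y := vecMulVec (N *ᵥ z) (N *ᵥ z)
  have hY : Y = N * vecMulVec z z * N := by
    rw [mul_vecMulVec, vecMulVec_mul, ← mulVec_transpose, hN]
  have hYBN : (Y * B * N).trace = Y.trace := by
    rw [hY, Matrix.mul_assoc (N * vecMulVec z z) N B, Matrix.mul_assoc _ (N * B), hB]
  have hNBY : (N * B * Y).trace = Y.trace := by
    rw [hY, ← Matrix.mul_assoc, ← Matrix.mul_assoc, hB]
  have hexpand : (Y - N) * B * (Y - N) = Y * B * Y - Y * B * N - N * B * Y + N * B * N := by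
    noncomm_ring
  rw [hexpand, trace_add, trace_sub, trace_sub, trace_vecMulVec_mul_vecMulVec, hYBN, hNBY, hB,
    trace_vecMulVec]
  ring

theorem dotProduct_mulVec_add_eq_complete_square {X : Matrix m k ℝ} {D : Matrix k k ℝ}
    {V : Matrix m m ℝ} (hD : Dᵀ = D) (hV : Vᵀ = V) {y z u : m → ℝ} {w : k → ℝ}
    (hz : (X * D * Xᵀ + V) *ᵥ z = y) (hy : V *ᵥ u + X *ᵥ (D *ᵥ w) = y) :
    u ⬝ᵥ V *ᵥ u + w ⬝ᵥ D *ᵥ w = y ⬝ᵥ z + (z - u) ⬝ᵥ V *ᵥ (z - u) +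
      (w - Xᵀ *ᵥ z) ⬝ᵥ D *ᵥ (w - Xᵀ *ᵥ z) := by
  have hzz : (Xᵀ *ᵥ z) ⬝ᵥ D *ᵥ (Xᵀ *ᵥ z) + z ⬝ᵥ V *ᵥ z = z ⬝ᵥ y := by
    rw [← hz, add_mulVec, dotProduct_add, dotProduct_mul_mul_transpose_mulVec]
  have huz : u ⬝ᵥ V *ᵥ z + w ⬝ᵥ D *ᵥ (Xᵀ *ᵥ z) = y ⬝ᵥ z := by
    rw [← hy, add_dotProduct, dotProduct_comm (V *ᵥ u), dotProduct_comm (X *ᵥ _),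
      dotProduct_mulVec_comm_of_transpose_eq hV, dotProduct_mulVec_comm_of_transpose_eq hD,
      dotProduct_mulVec z X, ← mulVec_transpose]
  have hV' := dotProduct_mulVec_comm_of_transpose_eq hV z u
  have hD' := dotProduct_mulVec_comm_of_transpose_eq hD (Xᵀ *ᵥ z) w
  have hyz := dotProduct_comm y z
  simp only [mulVec_sub, dotProduct_sub, sub_dotProduct]
  linarith

end Matrix

namespace IsMoorePenrose

variable {m : Type*} [Fintype m]

theorem mulVec_mulVec_of_mem_range {A B : Matrix m m ℝ}
    (hB : IsMoorePenrose A B) {y : m → ℝ} (hy : y ∈ Set.range A.mulVec) :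
    A *ᵥ (B *ᵥ y) = y := by
  obtain ⟨z, rfl⟩ := hy
  rw [mulVec_mulVec, mulVec_mulVec, hB.1]

theorem mulVec_mulVec_of_forall_vecMul_eq_zero {A B : Matrix m m ℝ}
    (hB : IsMoorePenrose A B) {y : m → ℝ} (hy : ∀ w, w ᵥ* A = 0 → w ⬝ᵥ y = 0) :
    A *ᵥ (B *ᵥ y) = y := by
  rw [mulVec_mulVec]
  have hP : (A * B) *ᵥ y = y ᵥ* (A * B) := by rw [← vecMul_transpose, hB.2.2.1]
  set w := y - (A * B) *ᵥ y with hw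
  have hwA : w ᵥ* A = 0 := by
    rw [hw, sub_vecMul, hP, vecMul_vecMul, hB.1, sub_self]
  have hwP : w ⬝ᵥ (A * B) *ᵥ y = 0 := by
    rw [dotProduct_mulVec, ← vecMul_vecMul, hwA, zero_vecMul, zero_dotProduct]
  have hww : w ⬝ᵥ w = 0 := by
    conv_lhs => arg 2; rw [hw]
    rw [dotProduct_sub, hy w hwA, hwP, sub_zero]
  exact (sub_eq_zero.mp (dotProduct_self_eq_zero.mp hww)).symm

theorem dotProduct_mulVec_mulVec {A B : Matrix m m ℝ} (hA : Aᵀ = A)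
    (hB : IsMoorePenrose A B) (x : m → ℝ) : (A *ᵥ x) ⬝ᵥ B *ᵥ (A *ᵥ x) = x ⬝ᵥ A *ᵥ x := by
  rw [dotProduct_comm, dotProduct_mulVec, ← mulVec_transpose, hA, mulVec_mulVec, mulVec_mulVec,
    hB.1, dotProduct_comm]

end IsMoorePenrose

section Spice

variable {n d : ℕ} (y : Fin n → ℝ) (X : Matrix (Fin n) (Fin d) ℝ)
  (pinvn : Matrix (Fin n) (Fin n) ℝ → Matrix (Fin n) (Fin n) ℝ)

/-- The minimum of `J(·; D, V)` over `Θ(D, V)`. -/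
noncomputable def profiledCost (p : Matrix (Fin d) (Fin d) ℝ × Matrix (Fin n) (Fin n) ℝ) : ℝ :=
  y ⬝ᵥ pinvn (Nmat X p) *ᵥ y + (Nmat X p).trace / (y ⬝ᵥ y)

variable {y X pinvn} {pinvd : Matrix (Fin d) (Fin d) ℝ → Matrix (Fin d) (Fin d) ℝ}
  {D : Matrix (Fin d) (Fin d) ℝ} {V : Matrix (Fin n) (Fin n) ℝ}

theorem Nmat_posSemidef_s11 (hD : D.PosSemidef) (hV : V.PosSemidef) :
    (Nmat X (D, V)).PosSemidef := by
  simpa [Nmat] using (hD.mul_mul_conjTranspose_same X).add hV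

theorem Nmat_mulVec_mulVec_of_mem_Theta (hD : D.PosSemidef) (hV : V.PosSemidef)
    {B : Matrix (Fin n) (Fin n) ℝ} (hB : IsMoorePenrose (Nmat X (D, V)) B) {β : Fin d → ℝ}
    (hβ : β ∈ Theta y X (D, V)) : Nmat X (D, V) *ᵥ (B *ᵥ y) = y := by
  refine hB.mulVec_mulVec_of_forall_vecMul_eq_zero fun w hw => ?_
  obtain ⟨⟨u, hu⟩, ⟨v, hv⟩⟩ := hβ
  have hq : (Xᵀ *ᵥ w) ⬝ᵥ D *ᵥ (Xᵀ *ᵥ w) + w ⬝ᵥ V *ᵥ w = 0 := by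
    rw [← dotProduct_mul_mul_transpose_mulVec, ← dotProduct_add, ← add_mulVec,
      dotProduct_mulVec]
    exact (congrArg (· ⬝ᵥ w) hw).trans (zero_dotProduct w)
  obtain ⟨hDw, hVw⟩ := hD.mulVec_eq_zero_of_dotProduct_add_eq_zero hV hq
  have hy : y = V *ᵥ u + X *ᵥ (D *ᵥ v) := by
    simp only at hu hv
    rw [hu, hv, sub_add_cancel]
  rw [hy, dotProduct_add, dotProduct_mulVec_comm_of_transpose_eq hV.transpose_eq_self_s11, hVw,
    dotProduct_mulVec w X, ← mulVec_transpose,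
    dotProduct_mulVec_comm_of_transpose_eq hD.transpose_eq_self_s11, hDw, dotProduct_zero,
    dotProduct_zero, add_zero]

theorem mulVec_mulVec_eq_sub_mulVec_of_Nmat {B : Matrix (Fin n) (Fin n) ℝ}
    (hy : Nmat X (D, V) *ᵥ (B *ᵥ y) = y) : V *ᵥ (B *ᵥ y) = y - X *ᵥ ((D * Xᵀ * B) *ᵥ y) := by
  rw [Nmat, add_mulVec, ← mulVec_mulVec, ← mulVec_mulVec] at hy
  simp only [← mulVec_mulVec]
  exact eq_sub_of_add_eq' hy

theorem mul_transpose_mul_mulVec_mem_Theta {B : Matrix (Fin n) (Fin n) ℝ}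
    (hy : Nmat X (D, V) *ᵥ (B *ᵥ y) = y) : (D * Xᵀ * B) *ᵥ y ∈ Theta y X (D, V) :=
  ⟨⟨B *ᵥ y, mulVec_mulVec_eq_sub_mulVec_of_Nmat hy⟩,
    ⟨Xᵀ *ᵥ (B *ᵥ y), by simp only [mulVec_mulVec, Matrix.mul_assoc]⟩⟩

theorem Jcost_eq_complete_square (hD : D.PosSemidef) (hV : V.PosSemidef)
    (hDp : IsMoorePenrose D (pinvd D)) (hVp : IsMoorePenrose V (pinvn V))
    {B : Matrix (Fin n) (Fin n) ℝ} (hy : Nmat X (D, V) *ᵥ (B *ᵥ y) = y)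
    {β : Fin d → ℝ} {u : Fin n → ℝ} {w : Fin d → ℝ}
    (hu : V *ᵥ u = y - X *ᵥ β) (hw : D *ᵥ w = β) :
    Jcost y X pinvd pinvn (D, V) β =
      y ⬝ᵥ B *ᵥ y + (Nmat X (D, V)).trace / (y ⬝ᵥ y) +
        ((B *ᵥ y - u) ⬝ᵥ V *ᵥ (B *ᵥ y - u) +
          (w - Xᵀ *ᵥ (B *ᵥ y)) ⬝ᵥ D *ᵥ (w - Xᵀ *ᵥ (B *ᵥ y))) := by
  have hsplit : V *ᵥ u + X *ᵥ (D *ᵥ w) = y := by rw [hu, hw, sub_add_cancel]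
  simp only [Jcost]
  rw [← hu, ← hw, hVp.dotProduct_mulVec_mulVec hV.transpose_eq_self_s11,
    hDp.dotProduct_mulVec_mulVec hD.transpose_eq_self_s11,
    dotProduct_mulVec_add_eq_complete_square hD.transpose_eq_self_s11 hV.transpose_eq_self_s11 hy
      hsplit, dotProduct_comm y]
  ring

theorem profiledCost_le_Jcost (hD : D.PosSemidef) (hV : V.PosSemidef)
    (hDp : IsMoorePenrose D (pinvd D)) (hVp : IsMoorePenrose V (pinvn V))
    (hN : IsMoorePenrose (Nmat X (D, V)) (pinvn (Nmat X (D, V)))) {β : Fin d → ℝ}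
    (hβ : β ∈ Theta y X (D, V)) :
    profiledCost y X pinvn (D, V) ≤ Jcost y X pinvd pinvn (D, V) β := by
  obtain ⟨⟨u, hu⟩, ⟨w, hw⟩⟩ := id hβ
  rw [Jcost_eq_complete_square hD hV hDp hVp (Nmat_mulVec_mulVec_of_mem_Theta hD hV hN hβ) hu hw]
  have hVq := hV.dotProduct_mulVec_self_nonneg (pinvn (Nmat X (D, V)) *ᵥ y - u)
  have hDq := hD.dotProduct_mulVec_self_nonneg (w - Xᵀ *ᵥ (pinvn (Nmat X (D, V)) *ᵥ y))
  unfold profiledCost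
  linarith

theorem eq_of_Jcost_le_profiledCost (hD : D.PosSemidef) (hV : V.PosSemidef)
    (hDp : IsMoorePenrose D (pinvd D)) (hVp : IsMoorePenrose V (pinvn V))
    (hN : IsMoorePenrose (Nmat X (D, V)) (pinvn (Nmat X (D, V)))) {β : Fin d → ℝ}
    (hβ : β ∈ Theta y X (D, V))
    (h : Jcost y X pinvd pinvn (D, V) β ≤ profiledCost y X pinvn (D, V)) :
    β = (D * Xᵀ * pinvn (Nmat X (D, V))) *ᵥ y := by
  obtain ⟨⟨u, hu⟩, ⟨w, hw⟩⟩ := id hβ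
  rw [Jcost_eq_complete_square hD hV hDp hVp (Nmat_mulVec_mulVec_of_mem_Theta hD hV hN hβ) hu hw,
    profiledCost] at h
  have hVq := hV.dotProduct_mulVec_self_nonneg (pinvn (Nmat X (D, V)) *ᵥ y - u)
  have hDq := hD.dotProduct_mulVec_self_nonneg (w - Xᵀ *ᵥ (pinvn (Nmat X (D, V)) *ᵥ y))
  obtain ⟨-, hDw⟩ := hV.mulVec_eq_zero_of_dotProduct_add_eq_zero hD (by linarith)
  simp only at hw
  rw [mulVec_sub, hw, sub_eq_zero] at hDw
  rw [hDw]
  simp only [mulVec_mulVec, Matrix.mul_assoc]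

theorem Jcost_mul_transpose_mul_mulVec (hD : D.PosSemidef) (hV : V.PosSemidef)
    (hDp : IsMoorePenrose D (pinvd D)) (hVp : IsMoorePenrose V (pinvn V))
    (hy : Nmat X (D, V) *ᵥ (pinvn (Nmat X (D, V)) *ᵥ y) = y) :
    Jcost y X pinvd pinvn (D, V) ((D * Xᵀ * pinvn (Nmat X (D, V))) *ᵥ y) =
      profiledCost y X pinvn (D, V) := by
  rw [Jcost_eq_complete_square hD hV hDp hVp hy (mulVec_mulVec_eq_sub_mulVec_of_Nmat hy)
    (w := Xᵀ *ᵥ (pinvn (Nmat X (D, V)) *ᵥ y)) (by simp only [mulVec_mulVec, Matrix.mul_assoc])]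
  simp only [sub_self, mulVec_zero, dotProduct_zero, add_zero]
  rfl

theorem Wcrit_eq_profiledCost (hD : D.PosSemidef) (hV : V.PosSemidef)
    (hN : IsMoorePenrose (Nmat X (D, V)) (pinvn (Nmat X (D, V))))
    (hy : y ∈ Set.range (Nmat X (D, V)).mulVec) (hc : y ⬝ᵥ y ≠ 0) :
    Wcrit y X pinvn (D, V) = (y ⬝ᵥ y) * (profiledCost y X pinvn (D, V) - 2) := by
  rw [Wcrit, trace_transpose_mul_mul_vecMulVec_sub (Nmat_posSemidef_s11 hD hV).transpose_eq_self_s11 hN.1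
    hy, profiledCost]
  field_simp
  ring

theorem Gfun_le_Jcost {S : Set (Matrix (Fin d) (Fin d) ℝ × Matrix (Fin n) (Fin n) ℝ)}
    {p : Matrix (Fin d) (Fin d) ℝ × Matrix (Fin n) (Fin n) ℝ} (hp : p ∈ S) {β : Fin d → ℝ}
    (hβ : β ∈ Theta y X p) : Gfun y X pinvd pinvn S β ≤ Jcost y X pinvd pinvn p β :=
  sInf_le ⟨p, hp, hβ, rfl⟩

end Spice

/-- If `W` is minimized by some feasible pair in `𝒮`, `β_G` minimizes `G`, and the
infimum defining `G(β_G)` is attained at `(D_G, V_G)`, then `(D_G, V_G)` minimizes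
`W` over the feasible pairs and `β_G = D_G Xᵀ N(D_G,V_G)† y`. -/
theorem stmt11 {n d : ℕ} (y : Fin n → ℝ) (hy0 : y ≠ 0)
    (X : Matrix (Fin n) (Fin d) ℝ)
    (S : Set (Matrix (Fin d) (Fin d) ℝ × Matrix (Fin n) (Fin n) ℝ))
    (hS : ∀ p ∈ S, p.1.PosSemidef ∧ p.2.PosSemidef)
    (pinvd : Matrix (Fin d) (Fin d) ℝ → Matrix (Fin d) (Fin d) ℝ)
    (pinvn : Matrix (Fin n) (Fin n) ℝ → Matrix (Fin n) (Fin n) ℝ)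
    (hpinvd : ∀ A : Matrix (Fin d) (Fin d) ℝ, A.PosSemidef →
      IsMoorePenrose A (pinvd A))
    (hpinvn : ∀ A : Matrix (Fin n) (Fin n) ℝ, A.PosSemidef →
      IsMoorePenrose A (pinvn A))
    (Ds : Matrix (Fin d) (Fin d) ℝ) (Vs : Matrix (Fin n) (Fin n) ℝ)
    (hmem : (Ds, Vs) ∈ S)
    (hfeas : y ∈ Set.range (Nmat X (Ds, Vs)).mulVec)
    (hmin : ∀ p ∈ S, y ∈ Set.range (Nmat X p).mulVec →
      Wcrit y X pinvn (Ds, Vs) ≤ Wcrit y X pinvn p)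
    (βG : Fin d → ℝ)
    (hβG : ∀ β : Fin d → ℝ, Gfun y X pinvd pinvn S βG ≤ Gfun y X pinvd pinvn S β)
    (DG : Matrix (Fin d) (Fin d) ℝ) (VG : Matrix (Fin n) (Fin n) ℝ)
    (hGmem : (DG, VG) ∈ S) (hGTheta : βG ∈ Theta y X (DG, VG))
    (hGatt : (Jcost y X pinvd pinvn (DG, VG) βG : EReal) =
      Gfun y X pinvd pinvn S βG) :
    (∀ p ∈ S, y ∈ Set.range (Nmat X p).mulVec →
        Wcrit y X pinvn (DG, VG) ≤ Wcrit y X pinvn p) ∧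
      βG = (DG * Xᵀ * pinvn (Nmat X (DG, VG))).mulVec y := by
  obtain ⟨hDG, hVG⟩ := hS _ hGmem
  obtain ⟨hDs, hVs⟩ := hS _ hmem
  have hNG := hpinvn _ (Nmat_posSemidef_s11 (X := X) hDG hVG)
  have hNs := hpinvn _ (Nmat_posSemidef_s11 (X := X) hDs hVs)
  have hyG := Nmat_mulVec_mulVec_of_mem_Theta hDG hVG hNG hGTheta
  have hys := hNs.mulVec_mulVec_of_mem_range hfeas
  have hc : 0 < y ⬝ᵥ y := by simpa using dotProduct_star_self_pos_iff.mpr hy0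
  have hWG := Wcrit_eq_profiledCost hDG hVG hNG ⟨_, hyG⟩ hc.ne'
  have hWs := Wcrit_eq_profiledCost hDs hVs hNs hfeas hc.ne'
  have hJ : Jcost y X pinvd pinvn (DG, VG) βG ≤ profiledCost y X pinvn (Ds, Vs) := by
    rw [← Jcost_mul_transpose_mul_mulVec hDs hVs (hpinvd _ hDs) (hpinvn _ hVs) hys]
    have hG := (hβG _).trans (Gfun_le_Jcost hmem (mul_transpose_mul_mulVec_mem_Theta hys))
    rw [← hGatt] at hG
    exact_mod_cast hG
  have hGs : profiledCost y X pinvn (DG, VG) ≤ profiledCost y X pinvn (Ds, Vs) :=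
    (profiledCost_le_Jcost hDG hVG (hpinvd _ hDG) (hpinvn _ hVG) hNG hGTheta).trans hJ
  have hsG : profiledCost y X pinvn (Ds, Vs) ≤ profiledCost y X pinvn (DG, VG) := by
    have hW := hmin _ hGmem ⟨_, hyG⟩
    rw [hWG, hWs, mul_le_mul_iff_of_pos_left hc] at hW
    linarith
  refine ⟨fun p hp hyp => le_trans ?_ (hmin p hp hyp), ?_⟩
  · rw [hWG, hWs]
    gcongr
  · exact eq_of_Jcost_le_profiledCost hDG hVG (hpinvd _ hDG) (hpinvn _ hVG) hNG hGTheta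
      (hJ.trans hsG)
end

section
/- Let y ∈ ℝⁿ with y ≠ 0, X an n×d real matrix, and β ∈ ℝᵈ. Then the infimum, over all diagonal positive semidefinite matrices D = diag(c₁,…,c_d) and V = diag(v₁,…,v_n) such that y − Xβ ∈ range(V) and β ∈ range(D), of (y − Xβ)ᵀ V† (y − Xβ) + βᵀ D† β + tr(X D Xᵀ + V)/‖y‖₂² equals (2n/‖y‖₂) · ( MAD(β) + (1/√n) Σⱼ √(Ĉⱼⱼ) |βⱼ| ), where MAD(β) = ‖y − Xβ‖₁/n and Ĉ = XᵀX/n with diagonal entries Ĉⱼⱼ. Consequently, minimizing this infimum over β is equivalent to minimizing the ℓ₁-penalized least absolute deviation criterion MAD(β) + λ Σⱼ √(Ĉⱼⱼ)|βⱼ| with the tuned regularization parameter λ = 1/√n. -/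
/-!
Since `D` and `V` are diagonal, the objective splits into a sum of scalar terms `b² c⁻¹ + c k`
over `c ≥ 0`, where `c = 0` is admissible only if `b = 0` (the range condition). By AM–GM each
term is at least `2 |b| √k`, and `c = |b| / (√k + δ)` comes arbitrarily close (the bound is not
attained when `k = 0 ≠ b`). The infimum of a Minkowski sum of sets is the sum of the infima, and
with `k = 1/‖y‖²` for the residual coordinates and `k = (XᵀX)ⱼⱼ/‖y‖²` for the coefficients this
gives `(2/‖y‖) (‖y − Xβ‖₁ + Σⱼ √(XᵀX)ⱼⱼ |βⱼ|)`, a positive multiple of the criterion once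
`y ≠ 0`, so the two have the same minimizers.
-/

open Matrix

/-- The inner infimum over diagonal PSD matrices `D = diag(c)`, `V = diag(v)` with
`y − Xβ ∈ range(V)` and `β ∈ range(D)` of
`(y − Xβ)ᵀ V† (y − Xβ) + βᵀ D† β + tr(X D Xᵀ + V)/‖y‖₂²`
(the pseudoinverse of `diag(a)` with nonnegative entries is entrywise inversion,
with `0† = 0`). -/
noncomputable def innerInf {n d : ℕ} (y : Fin n → ℝ)
    (X : Matrix (Fin n) (Fin d) ℝ) (β : Fin d → ℝ) : ℝ :=
  sInf {r : ℝ | ∃ (c : Fin d → ℝ) (v : Fin n → ℝ),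
    (∀ j, 0 ≤ c j) ∧ (∀ i, 0 ≤ v i) ∧
    y - X.mulVec β ∈ Set.range (Matrix.diagonal v).mulVec ∧
    β ∈ Set.range (Matrix.diagonal c).mulVec ∧
    r = (y - X.mulVec β) ⬝ᵥ
        (Matrix.diagonal fun i => (v i)⁻¹).mulVec (y - X.mulVec β) +
      β ⬝ᵥ (Matrix.diagonal fun j => (c j)⁻¹).mulVec β +
      (X * Matrix.diagonal c * Xᵀ + Matrix.diagonal v).trace / (y ⬝ᵥ y)}

/-- The ℓ₁-penalized least absolute deviation criterion
`MAD(β) + λ Σⱼ √(Ĉⱼⱼ)|βⱼ|` with the tuned `λ = 1/√n`, where `Ĉ = XᵀX/n`. -/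
noncomputable def ladCrit {n d : ℕ} (y : Fin n → ℝ)
    (X : Matrix (Fin n) (Fin d) ℝ) (β : Fin d → ℝ) : ℝ :=
  (∑ i, |(y - X.mulVec β) i|) / n +
    (1 / Real.sqrt n) *
      ∑ j, Real.sqrt (((1 / (n : ℝ)) • (Xᵀ * X)) j j) * |β j|

open scoped Pointwise

theorem mem_range_mulVec_diagonal_iff {K ι : Type*} [DivisionRing K] [Fintype ι] [DecidableEq ι]
    {v x : ι → K} : x ∈ Set.range (diagonal v).mulVec ↔ ∀ i, v i = 0 → x i = 0 := by
  constructor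
  · rintro ⟨w, rfl⟩ i hi
    simp [mulVec_diagonal, hi]
  · intro h
    refine ⟨fun i => (v i)⁻¹ * x i, funext fun i => ?_⟩
    rcases eq_or_ne (v i) 0 with hv | hv
    · simp [mulVec_diagonal, hv, h i hv]
    · simp [mulVec_diagonal, mul_inv_cancel_left₀ hv]

theorem trace_mul_diagonal_mul_transpose {R m ι : Type*} [CommSemiring R] [Fintype m] [Fintype ι]
    [DecidableEq ι] (X : Matrix m ι R) (c : ι → R) :
    (X * diagonal c * Xᵀ).trace = ∑ j, (Xᵀ * X) j j * c j := by
  rw [trace_mul_comm, ← Matrix.mul_assoc]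
  simp only [trace, diag, mul_diagonal]

theorem transpose_mul_self_apply_self_nonneg {R m ι : Type*} [CommRing R] [LinearOrder R]
    [IsStrictOrderedRing R] [Fintype m] (X : Matrix m ι R) (j : ι) :
    0 ≤ (Xᵀ * X) j j :=
  Finset.sum_nonneg fun _ _ => mul_self_nonneg _

theorem innerInf_objective_eq_sum {n d : ℕ} (y : Fin n → ℝ) (X : Matrix (Fin n) (Fin d) ℝ)
    (β c : Fin d → ℝ) (v : Fin n → ℝ) :
    (y - X *ᵥ β) ⬝ᵥ (diagonal fun i => (v i)⁻¹) *ᵥ (y - X *ᵥ β) +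
        β ⬝ᵥ (diagonal fun j => (c j)⁻¹) *ᵥ β +
        (X * diagonal c * Xᵀ + diagonal v).trace / (y ⬝ᵥ y) =
      (∑ i, ((y - X *ᵥ β) i ^ 2 * (v i)⁻¹ + v i * (y ⬝ᵥ y)⁻¹)) +
        ∑ j, (β j ^ 2 * (c j)⁻¹ + c j * ((Xᵀ * X) j j / (y ⬝ᵥ y))) := by
  set S := y ⬝ᵥ y
  trans (∑ i, ((y - X *ᵥ β) i * ((v i)⁻¹ * (y - X *ᵥ β) i) + v i / S)) +
    ∑ j, (β j * ((c j)⁻¹ * β j) + (Xᵀ * X) j j * c j / S)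
  · simp only [trace_add, trace_mul_diagonal_mul_transpose, trace_diagonal, dotProduct,
      mulVec_diagonal, Finset.sum_add_distrib, add_div, Finset.sum_div]
    ring
  · congr 1 <;> exact Finset.sum_congr rfl fun _ _ => by ring

theorem isGLB_finsetSum {ι G : Type*} [AddCommGroup G] [PartialOrder G] [IsOrderedAddMonoid G]
    (s : Finset ι) {S : ι → Set G} {a : ι → G} (h : ∀ i ∈ s, IsGLB (S i) (a i)) :
    IsGLB (∑ i ∈ s, S i) (∑ i ∈ s, a i) := by
  classical
  induction s using Finset.induction_on with
  | empty => exact isGLB_singleton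
  | insert i s hi ih =>
    rw [Finset.sum_insert hi, Finset.sum_insert hi]
    exact (h i (s.mem_insert_self i)).add (ih fun j hj => h j (Finset.mem_insert_of_mem hj))

theorem two_mul_abs_mul_sqrt_le {b c k : ℝ} (hc : 0 ≤ c) (hk : 0 ≤ k) (hb : c = 0 → b = 0) :
    2 * |b| * √k ≤ b ^ 2 * c⁻¹ + c * k := by
  rcases hc.eq_or_lt with rfl | hc
  · simp [hb rfl]
  have hexp : (|b| - c * √k) ^ 2 / c = b ^ 2 * c⁻¹ + c * k - 2 * |b| * √k := by
    field_simp
    rw [sub_sq, mul_pow, sq_abs, Real.sq_sqrt hk]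
    ring
  have : 0 ≤ (|b| - c * √k) ^ 2 / c := by positivity
  linarith

theorem exists_sq_mul_inv_add_mul_le (b : ℝ) {k ε : ℝ} (hk : 0 ≤ k) (hε : 0 < ε) :
    ∃ c, (0 ≤ c ∧ (c = 0 → b = 0)) ∧ b ^ 2 * c⁻¹ + c * k ≤ 2 * |b| * √k + ε := by
  rcases eq_or_ne b 0 with rfl | hb
  · exact ⟨0, ⟨le_rfl, fun _ => rfl⟩, by simp [hε.le]⟩
  have hb' : 0 < |b| := abs_pos.2 hb
  set s := √k
  have hks : k = s ^ 2 := (Real.sq_sqrt hk).symm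
  have hsε : 0 < s + ε / |b| := by positivity
  refine ⟨|b| / (s + ε / |b|), ⟨by positivity, fun h => absurd h (by positivity)⟩, ?_⟩
  have h1 : b ^ 2 * (|b| / (s + ε / |b|))⁻¹ = |b| * s + ε := by
    rw [← sq_abs]; field_simp
  have h2 : |b| / (s + ε / |b|) * k ≤ |b| * s := by
    rw [div_mul_eq_mul_div, div_le_iff₀ hsε, hks]
    have : 0 ≤ |b| * s * (ε / |b|) := by positivity
    nlinarith
  linarith

/-- `c = 0 → b = 0` is the one-coordinate form of `b ∈ range (diagonal c)`; without it the junk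
value `b ^ 2 * 0⁻¹ = 0` would pull the infimum down to `0`. -/
def quadOverLinValues (k b : ℝ) : Set ℝ :=
  (fun c => b ^ 2 * c⁻¹ + c * k) '' {c | 0 ≤ c ∧ (c = 0 → b = 0)}

theorem isGLB_quadOverLinValues (b : ℝ) {k : ℝ} (hk : 0 ≤ k) :
    IsGLB (quadOverLinValues k b) (2 * |b| * √k) := by
  refine ⟨?_, fun m hm => le_of_forall_pos_le_add fun ε hε => ?_⟩
  · rintro _ ⟨c, ⟨hc, hb⟩, rfl⟩
    exact two_mul_abs_mul_sqrt_le hc hk hb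
  · obtain ⟨c, hc, hle⟩ := exists_sq_mul_inv_add_mul_le b hk hε
    exact (hm ⟨c, hc, rfl⟩).trans hle

theorem innerInf_set_eq_sum_quadOverLinValues {n d : ℕ} (y : Fin n → ℝ) (X : Matrix (Fin n) (Fin d) ℝ)
    (β : Fin d → ℝ) :
    {r : ℝ | ∃ (c : Fin d → ℝ) (v : Fin n → ℝ),
      (∀ j, 0 ≤ c j) ∧ (∀ i, 0 ≤ v i) ∧
      y - X.mulVec β ∈ Set.range (Matrix.diagonal v).mulVec ∧
      β ∈ Set.range (Matrix.diagonal c).mulVec ∧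
      r = (y - X.mulVec β) ⬝ᵥ
          (Matrix.diagonal fun i => (v i)⁻¹).mulVec (y - X.mulVec β) +
        β ⬝ᵥ (Matrix.diagonal fun j => (c j)⁻¹).mulVec β +
        (X * Matrix.diagonal c * Xᵀ + Matrix.diagonal v).trace / (y ⬝ᵥ y)} =
      (∑ i, quadOverLinValues (y ⬝ᵥ y)⁻¹ ((y - X *ᵥ β) i)) +
        ∑ j, quadOverLinValues ((Xᵀ * X) j j / (y ⬝ᵥ y)) (β j) := by
  ext r
  simp only [Set.mem_add, Set.mem_fintype_sum, quadOverLinValues,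
    Set.mem_image, mem_range_mulVec_diagonal_iff, innerInf_objective_eq_sum]
  constructor
  · rintro ⟨c, v, hc, hv, hrv, hβc, rfl⟩
    exact ⟨_, ⟨_, fun i => ⟨v i, ⟨hv i, hrv i⟩, rfl⟩, rfl⟩,
      _, ⟨_, fun j => ⟨c j, ⟨hc j, hβc j⟩, rfl⟩, rfl⟩, rfl⟩
  · rintro ⟨_, ⟨g, hg, rfl⟩, _, ⟨h, hh, rfl⟩, rfl⟩
    choose v hv hgv using hg
    choose c hc hhc using hh
    refine ⟨c, v, fun j => (hc j).1, fun i => (hv i).1, fun i => (hv i).2,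
      fun j => (hc j).2, ?_⟩
    simp only [← hgv, ← hhc]

theorem innerInf_eq_sum {n d : ℕ} (y : Fin n → ℝ) (X : Matrix (Fin n) (Fin d) ℝ) (β : Fin d → ℝ) :
    innerInf y X β = (∑ i, 2 * |(y - X *ᵥ β) i| * √(y ⬝ᵥ y)⁻¹) +
      ∑ j, 2 * |β j| * √((Xᵀ * X) j j / (y ⬝ᵥ y)) := by
  have hS : 0 ≤ y ⬝ᵥ y := dotProduct_self_star_nonneg y
  have hglb := (isGLB_finsetSum Finset.univ fun i _ =>
      isGLB_quadOverLinValues ((y - X *ᵥ β) i) (inv_nonneg.2 hS)).add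
    (isGLB_finsetSum Finset.univ fun j _ =>
      isGLB_quadOverLinValues (β j) (div_nonneg (transpose_mul_self_apply_self_nonneg X j) hS))
  rw [innerInf, innerInf_set_eq_sum_quadOverLinValues]
  exact hglb.csInf_eq hglb.nonempty

theorem ladCrit_eq {n d : ℕ} (y : Fin n → ℝ) (X : Matrix (Fin n) (Fin d) ℝ) (β : Fin d → ℝ) :
    ladCrit y X β = ((∑ i, |(y - X *ᵥ β) i|) + ∑ j, √((Xᵀ * X) j j) * |β j|) / n := by
  rcases Nat.eq_zero_or_pos n with rfl | hn
  · simp [ladCrit]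
  have hn' : (0 : ℝ) < n := Nat.cast_pos.2 hn
  simp only [ladCrit, Matrix.smul_apply, smul_eq_mul, Real.sqrt_div' _ hn'.le,
    div_mul_eq_mul_div, ← Finset.sum_div]
  field_simp
  rw [Real.sq_sqrt hn'.le]
  ring

theorem innerInf_eq_mul_ladCrit {n d : ℕ} (y : Fin n → ℝ) (X : Matrix (Fin n) (Fin d) ℝ)
    (β : Fin d → ℝ) : innerInf y X β = 2 * n / √(y ⬝ᵥ y) * ladCrit y X β := by
  have hS : 0 ≤ y ⬝ᵥ y := dotProduct_self_star_nonneg y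
  have hres : ∑ i, 2 * |(y - X *ᵥ β) i| * √(y ⬝ᵥ y)⁻¹ = 2 / √(y ⬝ᵥ y) * ∑ i, |(y - X *ᵥ β) i| := by
    rw [Finset.mul_sum, Real.sqrt_inv]
    exact Finset.sum_congr rfl fun _ _ => by ring
  have hcoef : ∑ j, 2 * |β j| * √((Xᵀ * X) j j / (y ⬝ᵥ y)) =
      2 / √(y ⬝ᵥ y) * ∑ j, √((Xᵀ * X) j j) * |β j| := by
    rw [Finset.mul_sum]
    exact Finset.sum_congr rfl fun _ _ => by rw [Real.sqrt_div' _ hS]; ring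
  rcases Nat.eq_zero_or_pos n with rfl | hn
  · simp [innerInf_eq_sum]
  rw [innerInf_eq_sum, hres, hcoef, ladCrit_eq]
  field_simp

/-- The inner infimum equals `(2n/‖y‖₂)(MAD(β) + (1/√n) Σⱼ √(Ĉⱼⱼ)|βⱼ|)`;
consequently minimizing it over `β` is equivalent to minimizing the ℓ₁-penalized
least absolute deviation criterion with tuned `λ = 1/√n`. -/
theorem stmt18 {n d : ℕ} (y : Fin n → ℝ) (hy0 : y ≠ 0)
    (X : Matrix (Fin n) (Fin d) ℝ) :
    (∀ β : Fin d → ℝ,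
      innerInf y X β = 2 * n / Real.sqrt (y ⬝ᵥ y) * ladCrit y X β) ∧
    (∀ β : Fin d → ℝ,
      (∀ γ : Fin d → ℝ, innerInf y X β ≤ innerInf y X γ) ↔
        (∀ γ : Fin d → ℝ, ladCrit y X β ≤ ladCrit y X γ)) := by
  have hn : 0 < n := Nat.pos_of_ne_zero fun h => hy0 (funext fun i => (h ▸ i).elim0)
  have hS : 0 < y ⬝ᵥ y := dotProduct_self_star_pos_iff.2 hy0
  have hK : 0 < 2 * n / √(y ⬝ᵥ y) := by positivity
  refine ⟨innerInf_eq_mul_ladCrit y X, fun β => forall_congr' fun γ => ?_⟩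
  rw [innerInf_eq_mul_ladCrit, innerInf_eq_mul_ladCrit]
  exact mul_le_mul_iff_right₀ hK
end
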